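/- For all a1, a2, a3, a4, a5, a6, a7, a9 ∈ ℂ with a1 ≠ 0 and a9 ≠ 0, there exist α, β, γ, b2, b3 ∈ ℂ such that the ℂ-algebra endomorphism φ of ℂ[w, x, y, z] determined by φ(w) = w, φ(x) = x + γ·w, φ(y) = y + α·w + β·x, φ(z) = z sends the polynomial w⁴ + a1·x³·z + w·z·(a2·w² + a3·w·x + a4·w·y + a5·w·z + a6·x² + a7·x·y + a9·y²) to w⁴ + a1·x³·z + b2·w³·z + b3·w²·x·z + a5·w²·z² + a9·w·y²·z. (Completing the square in y eliminates the w²yz and wxyz terms, and completing the cube in x eliminates the wx²z term, yielding the quartic normal form of an M-polarised K3 surface in ℙ³.) -/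
import Mathlib


open MvPolynomial

/-- The variable `w` in `ℂ[w, x, y, z]`. -/
noncomputable def w : MvPolynomial (Fin 4) ℂ := X 0

/-- The variable `x` in `ℂ[w, x, y, z]`. -/
noncomputable def x : MvPolynomial (Fin 4) ℂ := X 1

/-- The variable `y` in `ℂ[w, x, y, z]`. -/
noncomputable def y : MvPolynomial (Fin 4) ℂ := X 2

/-- The variable `z` in `ℂ[w, x, y, z]`. -/
noncomputable def z : MvPolynomial (Fin 4) ℂ := X 3

/-- Completing the square in `y` and the cube in `x` yields the quartic normal
form of an `M`-polarised K3 surface in `ℙ³`. -/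
theorem quartic_normal_form (a1 a2 a3 a4 a5 a6 a7 a9 : ℂ) (ha1 : a1 ≠ 0) (ha9 : a9 ≠ 0) :
    ∃ α β γ b2 b3 : ℂ,
      aeval (fun i : Fin 4 =>
          if i = 0 then w
          else if i = 1 then x + C γ * w
          else if i = 2 then y + C α * w + C β * x
          else z)
        (w ^ 4 + C a1 * x ^ 3 * z + w * z * (C a2 * w ^ 2 + C a3 * w * x + C a4 * w * y
          + C a5 * w * z + C a6 * x ^ 2 + C a7 * x * y + C a9 * y ^ 2))
      = w ^ 4 + C a1 * x ^ 3 * z + C b2 * w ^ 3 * z + C b3 * w ^ 2 * x * z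
          + C a5 * w ^ 2 * z ^ 2 + C a9 * w * y ^ 2 * z := by

  set β : ℂ := -a7 / (2 * a9) with hβ
  set γ : ℂ := -(a6 + a7 * β + a9 * β ^ 2) / (3 * a1) with hγ
  set α : ℂ := -(a4 + a7 * γ) / (2 * a9) with hα
  set b2 : ℂ := a1 * γ ^ 3 + a2 + a3 * γ + a4 * α + a6 * γ ^ 2 + a7 * γ * α + a9 * α ^ 2 with hb2
  set b3 : ℂ := 3 * a1 * γ ^ 2 + a3 + a4 * β + 2 * a6 * γ + a7 * (α + γ * β) + 2 * a9 * α * β with hb3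
  refine ⟨α, β, γ, b2, b3, ?_⟩
  have h1 : a4 + a7 * γ + 2 * a9 * α = 0 := by
    rw [hα]; field_simp; ring
  have h2 : a7 + 2 * a9 * β = 0 := by
    rw [hβ]; field_simp; ring
  have h3 : 3 * a1 * γ + a6 + a7 * β + a9 * β ^ 2 = 0 := by
    rw [hγ]; field_simp; ring
  have H1 : (C (a4 + a7 * γ + 2 * a9 * α) : MvPolynomial (Fin 4) ℂ) = 0 := by
    rw [h1, map_zero]
  have H2 : (C (a7 + 2 * a9 * β) : MvPolynomial (Fin 4) ℂ) = 0 := by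
    rw [h2, map_zero]
  have H3 : (C (3 * a1 * γ + a6 + a7 * β + a9 * β ^ 2) : MvPolynomial (Fin 4) ℂ) = 0 := by
    rw [h3, map_zero]
  have Hb2 : (C b2 : MvPolynomial (Fin 4) ℂ)
      = C (a1 * γ ^ 3 + a2 + a3 * γ + a4 * α + a6 * γ ^ 2 + a7 * γ * α + a9 * α ^ 2) := by
    rw [hb2]
  have Hb3 : (C b3 : MvPolynomial (Fin 4) ℂ)
      = C (3 * a1 * γ ^ 2 + a3 + a4 * β + 2 * a6 * γ + a7 * (α + γ * β) + 2 * a9 * α * β) := by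
    rw [hb3]
  simp only [map_add, map_mul, map_pow, map_ofNat] at H1 H2 H3 Hb2 Hb3
  simp only [w, x, y, z, map_add, map_mul, map_pow, aeval_X, aeval_C, algebraMap_eq, Fin.isValue,
    Fin.reduceEq, reduceIte, if_true, if_false]
  linear_combination (X 0 ^ 2 * X 2 * X 3 : MvPolynomial (Fin 4) ℂ) * H1
    + (X 0 * X 1 * X 2 * X 3 : MvPolynomial (Fin 4) ℂ) * H2
    + (X 0 * X 1 ^ 2 * X 3 : MvPolynomial (Fin 4) ℂ) * H3
    - (X 0 ^ 3 * X 3 : MvPolynomial (Fin 4) ℂ) * Hb2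
    - (X 0 ^ 2 * X 1 * X 3 : MvPolynomial (Fin 4) ℂ) * Hb3
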